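/- arXiv:math/0206091 — 2 statements merged into one kernel-verified Lean document; each statement's English description precedes it below -/
import Mathlib

section
/- Let K be an algebraically closed field of characteristic p ≠ 3 and let y₁, …, y_n ∈ ℙ¹(K) be pairwise distinct points. Then there exists a nonconstant rational function h ∈ K(z) with only triple ramification such that every y_i is a branch point of h, i.e. for each i there is a point a_i ∈ ℙ¹(K) with h(a_i) = y_i and e_h(a_i) = 3. -/
set_option synthInstance.maxHeartbeats 1000000
set_option maxHeartbeats 1000000

noncomputable section
open scoped Classical

variable {K : Type*} [Field K]

/-- The self-map of `ℙ¹(K) = K ∪ {∞}` (encoded as `Option K`, with `none = ∞` and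
`some a = [a:1]`) induced by a nonconstant rational function `h ∈ K(z)`:
on `[a:1]` it is given by evaluation (poles are sent to `∞`), and at `∞` by the
substitution `z ↦ 1/z`. -/
def evalP (f : RatFunc K) : Option K → Option K
  | some a => if f.denom.eval a = 0 then none else some (f.num.eval a / f.denom.eval a)
  | none => if f.num.degree ≤ f.denom.degree
      then some (f.num.coeff f.denom.natDegree / f.denom.coeff f.denom.natDegree)
      else none

/-- The ramification index of a rational function `f ∈ K(z)` at a point `a ∈ K`:
if `f` is defined at `a` with value `b = f(a)`, it is the order of vanishing of
`f - b` at `a`, i.e. the multiplicity of `z - a` in the numerator of `f - b` written in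
lowest terms; if `f` has a pole at `a`, it is the pole order of `f` at `a`. -/
def ramIdxAt (f : RatFunc K) (a : K) : ℕ :=
  if f.denom.eval a = 0 then f.denom.rootMultiplicity a
  else ((f - RatFunc.C (f.num.eval a / f.denom.eval a)).num).rootMultiplicity a

/-- The ramification index of `f ∈ K(z)` at a point of `ℙ¹(K) = K ∪ {∞}`; at `∞` it is
the ramification index of `f(1/z)` at `0`. -/
def ramIdxP (f : RatFunc K) : Option K → ℕ
  | some a => ramIdxAt f a
  | none => ramIdxAt (RatFunc.eval (RatFunc.C : K →+* RatFunc K) (RatFunc.X)⁻¹ f) 0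

/-- A rational function is separable if its formal derivative is nonzero. -/
def SeparableRF (f : RatFunc K) : Prop :=
  Polynomial.derivative f.num * f.denom - f.num * Polynomial.derivative f.denom ≠ 0

/-- A rational function `f ∈ K(z)` has only triple ramification if it is separable and
every point of `ℙ¹(K)` has ramification index `1` or `3`. -/
def OnlyTripleRamification (f : RatFunc K) : Prop :=
  SeparableRF f ∧ ∀ p : Option K, ramIdxP f p = 1 ∨ ramIdxP f p = 3

/-!
Induct on the number of prescribed branch points, keeping all branch points away from a given
finite set `Z`. Given `y` and a fresh `t ∈ K`, let `g` be a Möbius transformation with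
`g 0 = y`, `g ∞ = t`, and take (by induction) `h₀` with only triple ramification whose branch
points avoid `0`, `∞` and `(g ∘ (·)³)⁻¹ Z`. Then `h = g ∘ h₀³` has only triple ramification:
writing `h₀ = [P : Q]` and `[u : v] = h₀(x)`, the fibre of `h₀³` through `x` is cut out by
`v³P³ - u³Q³ = (vP - uQ)(v²P² + uvPQ + u²Q²)`. The second factor equals `(vP - uQ)²` if
`uv = 0` and takes the value `3u²v² ≠ 0` at `x` otherwise, so cubing triples the (trivial)
ramification over `0` and `∞` and keeps it elsewhere. The branch points of `h` are `y`, `t` and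
the images of those of `h₀`.
-/

open Polynomial
open scoped OnePoint

namespace Polynomial

theorem rootMultiplicity_C_mul {R : Type*} [CommRing R] [IsDomain R] {c : R} (hc : c ≠ 0)
    (p : R[X]) (x : R) : rootMultiplicity x (C c * p) = rootMultiplicity x p := by
  rcases eq_or_ne p 0 with rfl | hp
  · simp
  · rw [rootMultiplicity_mul (mul_ne_zero (C_ne_zero.mpr hc) hp), rootMultiplicity_C, zero_add]

theorem rootMultiplicity_pow {R : Type*} [CommRing R] [IsDomain R] (p : R[X]) (n : ℕ) (x : R) :
    rootMultiplicity x (p ^ n) = n * rootMultiplicity x p := by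
  rw [← count_roots, roots_pow, Multiset.count_nsmul, count_roots]

theorem reflect_pow {R : Type*} [CommSemiring R] {p : R[X]} {N : ℕ} (hp : p.natDegree ≤ N)
    (n : ℕ) : reflect (n * N) (p ^ n) = reflect N p ^ n := by
  induction n with
  | zero => simp
  | succ n ih =>
    rw [pow_succ, pow_succ, add_one_mul,
      reflect_mul _ _ (natDegree_pow_le.trans (Nat.mul_le_mul_left n hp)) hp, ih]

theorem eval_zero_reflect {R : Type*} [Semiring R] (p : R[X]) (N : ℕ) :
    (reflect N p).eval 0 = p.coeff N := by
  rw [← coeff_zero_eq_eval_zero, coeff_reflect, revAt_le (Nat.zero_le N), Nat.sub_zero]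

theorem eval_reflect {p : K[X]} {N : ℕ} (hp : p.natDegree ≤ N) {x : K} (hx : x ≠ 0) :
    (reflect N p).eval x = x ^ N * p.eval x⁻¹ := by
  have : Invertible x⁻¹ := invertibleOfNonzero (inv_ne_zero hx)
  have h := eval₂_reflect_mul_pow (RingHom.id K) x⁻¹ N p hp
  rw [invOf_eq_inv, inv_inv] at h
  rw [← eval₂_id, ← eval₂_id, ← h, mul_left_comm, ← mul_pow, mul_inv_cancel₀ hx, one_pow, mul_one]

theorem sub_ne_zero_of_wronskian_ne_zero {R : Type*} [CommRing R] [IsDomain R] {P Q : R[X]}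
    (hW : wronskian P Q ≠ 0) {u v : R} (huv : u ≠ 0 ∨ v ≠ 0) : C v * P - C u * Q ≠ 0 := by
  intro h
  have hv : C v * wronskian P Q = 0 := by
    rw [← wronskian_zero_left Q, ← h]
    simp only [wronskian, derivative_sub, derivative_C_mul]; ring
  have hu : C u * wronskian P Q = 0 := by
    rw [← neg_eq_zero, ← wronskian_zero_right P, ← h]
    simp only [wronskian, derivative_sub, derivative_C_mul]; ring
  rcases huv with hu0 | hv0
  · exact hW ((mul_eq_zero.mp hu).resolve_left (C_ne_zero.mpr hu0))
  · exact hW ((mul_eq_zero.mp hv).resolve_left (C_ne_zero.mpr hv0))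

theorem gcd_eq_one_of_isCoprime {P Q : K[X]} (hPQ : IsCoprime P Q) : gcd P Q = 1 :=
  normalize_gcd P Q ▸ normalize_eq_one.mpr ((gcd_isUnit_iff P Q).mpr hPQ)

end Polynomial

theorem Matrix.GeneralLinearGroup.fin_two_smul_ne_zero (g : GL (Fin 2) K) {u v : K}
    (huv : u ≠ 0 ∨ v ≠ 0) : g 0 0 * u + g 0 1 * v ≠ 0 ∨ g 1 0 * u + g 1 1 * v ≠ 0 := by
  have h : g • ![u, v] ≠ 0 := (smul_eq_zero_iff_eq g).not.mpr
    (by simpa [funext_iff, Fin.forall_fin_two, or_iff_not_and_not] using huv)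
  simpa [funext_iff, Fin.forall_fin_two, or_iff_not_and_not] using h

namespace OnePoint

theorem exists_smul_zero_smul_infty {y : OnePoint K} {t : K} (hyt : y ≠ t) :
    ∃ g : GL (Fin 2) K, g • (↑(0 : K) : OnePoint K) = y ∧ g • (∞ : OnePoint K) = t := by
  induction y with
  | infty =>
    refine ⟨.mkOfDetNeZero !![t, 1; 1, 0] (by simp [Matrix.det_fin_two]), ?_, ?_⟩ <;>
      simp [smul_some_eq_ite, smul_infty_eq_ite]
  | coe y =>
    have hyt : t - y ≠ 0 := sub_ne_zero.mpr fun h ↦ hyt (by rw [h])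
    refine ⟨.mkOfDetNeZero !![t, y; 1, 1] (by simpa [Matrix.det_fin_two] using hyt), ?_, ?_⟩ <;>
      simp [smul_some_eq_ite, smul_infty_eq_ite]

theorem exists_coe_notMem {α : Type*} [Infinite α] {Z : Set (OnePoint α)} (hZ : Z.Finite) :
    ∃ t : α, (t : OnePoint α) ∉ Z :=
  (hZ.preimage coe_injective.injOn).infinite_compl.nonempty

theorem finite_preimage_map_pow {n : ℕ} (hn : n ≠ 0) {Z : Set (OnePoint K)} (hZ : Z.Finite) :
    (OnePoint.map (· ^ n) ⁻¹' Z).Finite := by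
  refine hZ.preimage' fun z _ ↦ ?_
  induction z with
  | infty =>
    refine (Set.finite_singleton ∞).subset fun w hw ↦ ?_
    induction w with
    | infty => rfl
    | coe w => simp at hw
  | coe c =>
    refine (((nthRoots n c).toFinset.finite_toSet).image (↑)).subset fun w hw ↦ ?_
    induction w with
    | infty => simp at hw
    | coe w =>
      simp only [Set.mem_preimage, map_some, Set.mem_singleton_iff, coe_eq_coe] at hw
      simp [mem_nthRoots (Nat.pos_of_ne_zero hn), hw]

theorem map_pow_surjective [IsAlgClosed K] {n : ℕ} (hn : n ≠ 0) :
    Function.Surjective (OnePoint.map (· ^ n : K → K)) := by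
  intro z
  induction z with
  | infty => exact ⟨∞, rfl⟩
  | coe c =>
    obtain ⟨w, rfl⟩ := IsAlgClosed.exists_pow_nat_eq c (Nat.pos_of_ne_zero hn)
    exact ⟨w, rfl⟩

end OnePoint

/-- The point `[u : v]` of `ℙ¹(K)`, with the junk value `[0 : 0] = ∞`. -/
def homog (u v : K) : OnePoint K := if v = 0 then ∞ else ↑(u / v)

theorem smul_homog (g : GL (Fin 2) K) {u v : K} (huv : u ≠ 0 ∨ v ≠ 0) :
    g • homog u v = homog (g 0 0 * u + g 0 1 * v) (g 1 0 * u + g 1 1 * v) := by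
  rcases eq_or_ne v 0 with rfl | hv
  · have hu : u ≠ 0 := by simpa using huv
    rw [homog, if_pos rfl, OnePoint.smul_infty_eq_ite, homog]
    simp only [mul_zero, add_zero, mul_eq_zero, hu, or_false]
    split_ifs
    · rfl
    · rw [mul_div_mul_right _ _ hu]
  · have e : g 1 0 * u + g 1 1 * v = v * (g 1 0 * (u / v) + g 1 1) := by field_simp
    rw [homog, if_neg hv, OnePoint.smul_some_eq_ite, homog, e]
    simp only [mul_eq_zero, hv, false_or]
    split_ifs
    · rfl
    · congr 1; field_simp

theorem homog_pow (u v : K) {n : ℕ} (hn : n ≠ 0) :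
    homog (u ^ n) (v ^ n) = (homog u v).map (· ^ n) := by
  by_cases hv : v = 0 <;> simp [homog, hv, hn, div_pow]

theorem homog_mem_zero_infty_iff (u v : K) :
    homog u v ∈ ({↑(0 : K), ∞} : Set (OnePoint K)) ↔ u * v = 0 := by
  by_cases hv : v = 0 <;> simp [homog, hv]

/-- The polynomial `Q(x) P - P(x) Q`, whose roots are the points where `[P : Q]` takes the same
value as at `x`, counted with multiplicity. -/
def fiberPoly (P Q : K[X]) (x : K) : K[X] := C (Q.eval x) * P - C (P.eval x) * Q

theorem fiberPoly_linearCombination (P Q : K[X]) (a b c d x : K) :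
    fiberPoly (C a * P + C b * Q) (C c * P + C d * Q) x =
      C (a * d - b * c) * fiberPoly P Q x := by
  simp only [fiberPoly, eval_add, eval_mul, eval_C, map_add, map_mul, map_sub]
  ring

theorem rootMultiplicity_fiberPoly_pow_three (h3 : (3 : K) ≠ 0) {P Q : K[X]} {x : K}
    (hF : fiberPoly P Q x ≠ 0) :
    rootMultiplicity x (fiberPoly (P ^ 3) (Q ^ 3) x) =
      if P.eval x * Q.eval x = 0 then 3 * rootMultiplicity x (fiberPoly P Q x)
      else rootMultiplicity x (fiberPoly P Q x) := by
  unfold fiberPoly at hF ⊢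
  simp only [eval_pow, C_pow]
  generalize hu : P.eval x = u at *
  generalize hv : Q.eval x = v at *
  set R := (C v * P) ^ 2 + C v * P * (C u * Q) + (C u * Q) ^ 2
  rw [show C v ^ 3 * P ^ 3 - C u ^ 3 * Q ^ 3 = (C v * P - C u * Q) * R by ring]
  split_ifs with huv
  · have hR : R = (C v * P - C u * Q) ^ 2 := by
      rcases mul_eq_zero.mp huv with rfl | rfl <;> simp [R]
    rw [hR, ← pow_succ', rootMultiplicity_pow]
  · have hRx : R.eval x ≠ 0 := by
      have : R.eval x = 3 * (u * v) ^ 2 := by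
        simp only [R, eval_add, eval_mul, eval_pow, eval_C, hu, hv]; ring
      rw [this]; exact mul_ne_zero h3 (pow_ne_zero 2 huv)
    rw [rootMultiplicity_mul (mul_ne_zero hF fun h ↦ hRx (by rw [h, eval_zero])),
      rootMultiplicity_eq_zero hRx, add_zero]

theorem wronskian_linearCombination (P Q : K[X]) (a b c d : K) :
    wronskian (C a * P + C b * Q) (C c * P + C d * Q) = C (a * d - b * c) * wronskian P Q := by
  simp only [wronskian, derivative_add, derivative_C_mul, map_sub, map_mul]
  ring

theorem wronskian_pow_three (P Q : K[X]) :
    wronskian (P ^ 3) (Q ^ 3) = C 3 * (P * Q) ^ 2 * wronskian P Q := by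
  simp only [wronskian, derivative_pow, Nat.cast_ofNat]
  ring

/-- The self-map of `ℙ¹(K)` given by `[P : Q]`, viewed as a map of degree `N`. -/
def ratMap (P Q : K[X]) (N : ℕ) : OnePoint K → OnePoint K
  | ∞ => homog (P.coeff N) (Q.coeff N)
  | (x : K) => homog (P.eval x) (Q.eval x)

/-- The ramification index of `[P : Q]`; at `∞` it is computed in the chart `z ↦ 1/z`, in which
the map becomes `[reflect N P : reflect N Q]`. -/
def ratMapRamIdx (P Q : K[X]) (N : ℕ) : OnePoint K → ℕ
  | ∞ => rootMultiplicity 0 (fiberPoly (reflect N P) (reflect N Q) 0)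
  | (x : K) => rootMultiplicity x (fiberPoly P Q x)

/-- `[P : Q]` is a separable rational map of degree `N`, written in lowest terms. -/
structure IsSeparableRatMap (P Q : K[X]) (N : ℕ) : Prop where
  natDegree_left_le : P.natDegree ≤ N
  natDegree_right_le : Q.natDegree ≤ N
  eval_ne_zero : ∀ x, P.eval x ≠ 0 ∨ Q.eval x ≠ 0
  coeff_ne_zero : P.coeff N ≠ 0 ∨ Q.coeff N ≠ 0
  wronskian_ne_zero : wronskian P Q ≠ 0

def branchValues (P Q : K[X]) (N : ℕ) : Set (OnePoint K) :=
  ratMap P Q N '' {p | ratMapRamIdx P Q N p = 3}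

section RatMap

variable {P Q : K[X]} {N : ℕ}

theorem ratMapRamIdx_linearCombination (g : GL (Fin 2) K) (p : OnePoint K) :
    ratMapRamIdx (C (g 0 0) * P + C (g 0 1) * Q) (C (g 1 0) * P + C (g 1 1) * Q) N p =
      ratMapRamIdx P Q N p := by
  have hdet : g 0 0 * g 1 1 - g 0 1 * g 1 0 ≠ 0 := by
    simpa [Matrix.det_fin_two] using g.det_ne_zero
  induction p with
  | infty =>
    simp only [ratMapRamIdx, reflect_add, reflect_C_mul, fiberPoly_linearCombination,
      rootMultiplicity_C_mul hdet]
  | coe x => simp only [ratMapRamIdx, fiberPoly_linearCombination, rootMultiplicity_C_mul hdet]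

theorem isSeparableRatMap_X_one : IsSeparableRatMap (X : K[X]) 1 1 := by
  refine ⟨natDegree_X_le, natDegree_one.trans_le zero_le_one, fun _ ↦ by simp, by simp, ?_⟩
  simp [wronskian]

theorem ratMap_X_one (p : OnePoint K) : ratMap (X : K[X]) 1 1 p = p := by
  induction p with
  | infty => simp [ratMap, homog, coeff_one]
  | coe x => simp [ratMap, homog]

theorem ratMapRamIdx_X_one (p : OnePoint K) : ratMapRamIdx (X : K[X]) 1 1 p = 1 := by
  induction p with
  | infty =>
    have : fiberPoly (reflect 1 (X : K[X])) (reflect 1 1) 0 = C (-1) * (X - C 0) := by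
      simp [fiberPoly, reflect_one]
    simp only [ratMapRamIdx, this, rootMultiplicity_C_mul (neg_ne_zero.mpr (one_ne_zero (α := K))),
      rootMultiplicity_X_sub_C_self]
  | coe x =>
    have : fiberPoly (X : K[X]) 1 x = X - C x := by simp [fiberPoly]
    simp only [ratMapRamIdx, this, rootMultiplicity_X_sub_C_self]

namespace IsSeparableRatMap

variable (hf : IsSeparableRatMap P Q N)
include hf

theorem left_ne_zero : P ≠ 0 := by
  rintro rfl; exact hf.wronskian_ne_zero (wronskian_zero_left Q)

theorem right_ne_zero : Q ≠ 0 := by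
  rintro rfl; exact hf.wronskian_ne_zero (wronskian_zero_right P)

theorem fiberPoly_ne_zero (x : K) : fiberPoly P Q x ≠ 0 :=
  sub_ne_zero_of_wronskian_ne_zero hf.wronskian_ne_zero (hf.eval_ne_zero x)

theorem fiberPoly_reflect_ne_zero : fiberPoly (reflect N P) (reflect N Q) 0 ≠ 0 := by
  rw [fiberPoly, eval_zero_reflect, eval_zero_reflect, ← reflect_C_mul, ← reflect_C_mul,
    ← reflect_sub, Ne, reflect_eq_zero_iff]
  exact sub_ne_zero_of_wronskian_ne_zero hf.wronskian_ne_zero hf.coeff_ne_zero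

theorem linearCombination (g : GL (Fin 2) K) :
    IsSeparableRatMap (C (g 0 0) * P + C (g 0 1) * Q) (C (g 1 0) * P + C (g 1 1) * Q) N := by
  have hdeg (a b : K) : (C a * P + C b * Q).natDegree ≤ N :=
    natDegree_add_le_of_degree_le ((natDegree_C_mul_le _ _).trans hf.natDegree_left_le)
      ((natDegree_C_mul_le _ _).trans hf.natDegree_right_le)
  refine ⟨hdeg _ _, hdeg _ _, fun x ↦ ?_, ?_, ?_⟩
  · simpa using Matrix.GeneralLinearGroup.fin_two_smul_ne_zero g (hf.eval_ne_zero x)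
  · simpa using Matrix.GeneralLinearGroup.fin_two_smul_ne_zero g hf.coeff_ne_zero
  · rw [wronskian_linearCombination]
    exact mul_ne_zero (C_ne_zero.mpr (by simpa [Matrix.det_fin_two] using g.det_ne_zero))
      hf.wronskian_ne_zero

theorem ratMap_linearCombination (g : GL (Fin 2) K) (p : OnePoint K) :
    ratMap (C (g 0 0) * P + C (g 0 1) * Q) (C (g 1 0) * P + C (g 1 1) * Q) N p =
      g • ratMap P Q N p := by
  induction p with
  | infty =>
    simp only [ratMap, coeff_add, coeff_C_mul, smul_homog g hf.coeff_ne_zero]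
  | coe x =>
    simp only [ratMap, eval_add, eval_mul, eval_C, smul_homog g (hf.eval_ne_zero x)]

theorem branchValues_linearCombination (g : GL (Fin 2) K) :
    branchValues (C (g 0 0) * P + C (g 0 1) * Q) (C (g 1 0) * P + C (g 1 1) * Q) N =
      (g • ·) '' branchValues P Q N := by
  simp only [branchValues, ratMapRamIdx_linearCombination, hf.ratMap_linearCombination g,
    Set.image_image]

theorem pow_three (h3 : (3 : K) ≠ 0) : IsSeparableRatMap (P ^ 3) (Q ^ 3) (3 * N) := by
  refine ⟨natDegree_pow_le.trans (Nat.mul_le_mul_left 3 hf.natDegree_left_le),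
    natDegree_pow_le.trans (Nat.mul_le_mul_left 3 hf.natDegree_right_le), fun x ↦ ?_, ?_, ?_⟩
  · simpa using hf.eval_ne_zero x
  · simpa [coeff_pow_of_natDegree_le hf.natDegree_left_le,
      coeff_pow_of_natDegree_le hf.natDegree_right_le] using hf.coeff_ne_zero
  · rw [wronskian_pow_three]
    exact mul_ne_zero (mul_ne_zero (C_ne_zero.mpr h3)
      (pow_ne_zero 2 (mul_ne_zero hf.left_ne_zero hf.right_ne_zero))) hf.wronskian_ne_zero

theorem ratMap_pow_three (p : OnePoint K) :
    ratMap (P ^ 3) (Q ^ 3) (3 * N) p = (ratMap P Q N p).map (· ^ 3) := by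
  induction p with
  | infty =>
    simp only [ratMap, coeff_pow_of_natDegree_le hf.natDegree_left_le,
      coeff_pow_of_natDegree_le hf.natDegree_right_le, homog_pow _ _ three_ne_zero]
  | coe x => simp only [ratMap, eval_pow, homog_pow _ _ three_ne_zero]

theorem ratMapRamIdx_pow_three (h3 : (3 : K) ≠ 0) (p : OnePoint K) :
    ratMapRamIdx (P ^ 3) (Q ^ 3) (3 * N) p =
      if ratMap P Q N p ∈ ({↑(0 : K), ∞} : Set (OnePoint K)) then 3 * ratMapRamIdx P Q N p
      else ratMapRamIdx P Q N p := by
  induction p with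
  | infty =>
    simp only [ratMapRamIdx, ratMap, homog_mem_zero_infty_iff,
      reflect_pow hf.natDegree_left_le, reflect_pow hf.natDegree_right_le,
      rootMultiplicity_fiberPoly_pow_three h3 hf.fiberPoly_reflect_ne_zero, eval_zero_reflect]
  | coe x =>
    simp only [ratMapRamIdx, ratMap, homog_mem_zero_infty_iff,
      rootMultiplicity_fiberPoly_pow_three h3 (hf.fiberPoly_ne_zero x)]

end IsSeparableRatMap

/-- Surjectivity, true of every nonconstant map, is included so that it need not be proved in
general. -/
structure IsOnlyTriplyRamified (P Q : K[X]) (N : ℕ) : Prop extends IsSeparableRatMap P Q N where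
  ratMapRamIdx_eq : ∀ p, ratMapRamIdx P Q N p = 1 ∨ ratMapRamIdx P Q N p = 3
  surjective : Function.Surjective (ratMap P Q N)

theorem isOnlyTriplyRamified_X_one : IsOnlyTriplyRamified (X : K[X]) 1 1 :=
  ⟨isSeparableRatMap_X_one, fun p ↦ .inl (ratMapRamIdx_X_one p), fun p ↦ ⟨p, ratMap_X_one p⟩⟩

theorem branchValues_X_one : branchValues (X : K[X]) 1 1 = ∅ := by
  simp [branchValues, ratMapRamIdx_X_one]

namespace IsOnlyTriplyRamified

variable (hf : IsOnlyTriplyRamified P Q N)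
include hf

theorem linearCombination (g : GL (Fin 2) K) :
    IsOnlyTriplyRamified (C (g 0 0) * P + C (g 0 1) * Q) (C (g 1 0) * P + C (g 1 1) * Q) N where
  toIsSeparableRatMap := hf.toIsSeparableRatMap.linearCombination g
  ratMapRamIdx_eq p := by simpa only [ratMapRamIdx_linearCombination] using hf.ratMapRamIdx_eq p
  surjective := by
    rw [show ratMap _ _ N = _ from funext (hf.ratMap_linearCombination g)]
    exact (MulAction.surjective g).comp hf.surjective

variable (h3 : (3 : K) ≠ 0) (hB : Disjoint (branchValues P Q N) {↑(0 : K), ∞})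
include h3 hB

theorem ratMapRamIdx_pow_three_eq (p : OnePoint K) :
    ratMapRamIdx (P ^ 3) (Q ^ 3) (3 * N) p =
      if ratMap P Q N p ∈ ({↑(0 : K), ∞} : Set (OnePoint K)) then 3
      else ratMapRamIdx P Q N p := by
  rw [hf.toIsSeparableRatMap.ratMapRamIdx_pow_three h3]
  split_ifs with hp
  · rcases hf.ratMapRamIdx_eq p with h1 | h3p
    · rw [h1]
    · exact absurd hp (hB.notMem_of_mem_left ⟨p, h3p, rfl⟩)
  · rfl

theorem pow_three [IsAlgClosed K] : IsOnlyTriplyRamified (P ^ 3) (Q ^ 3) (3 * N) where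
  toIsSeparableRatMap := hf.toIsSeparableRatMap.pow_three h3
  ratMapRamIdx_eq p := by
    rw [hf.ratMapRamIdx_pow_three_eq h3 hB]
    split_ifs
    exacts [.inr rfl, hf.ratMapRamIdx_eq p]
  surjective := by
    rw [show ratMap _ _ (3 * N) = _ from funext hf.ratMap_pow_three]
    exact (OnePoint.map_pow_surjective three_ne_zero).comp hf.surjective

theorem branchValues_pow_three :
    branchValues (P ^ 3) (Q ^ 3) (3 * N) =
      OnePoint.map (· ^ 3) '' insert ↑(0 : K) (insert ∞ (branchValues P Q N)) := by
  ext z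
  simp only [branchValues, Set.mem_image, Set.mem_ofPred_eq, hf.ratMapRamIdx_pow_three_eq h3 hB,
    hf.ratMap_pow_three]
  constructor
  · rintro ⟨p, hp, rfl⟩
    refine ⟨ratMap P Q N p, ?_, rfl⟩
    split_ifs at hp with h0
    · exact or_assoc.mp (.inl h0)
    · exact .inr (.inr ⟨p, hp, rfl⟩)
  · rintro ⟨w, hw, rfl⟩
    rcases hw with rfl | rfl | ⟨p, hp, rfl⟩
    · obtain ⟨p, hp⟩ := hf.surjective ↑(0 : K)
      exact ⟨p, by simp [hp], by rw [hp]⟩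
    · obtain ⟨p, hp⟩ := hf.surjective ∞
      exact ⟨p, by simp [hp], by rw [hp]⟩
    · exact ⟨p, by rwa [if_neg (hB.notMem_of_mem_left ⟨p, hp, rfl⟩)], rfl⟩

theorem exists_mobius_comp_cube [IsAlgClosed K] (g : GL (Fin 2) K) :
    ∃ P' Q' N', IsOnlyTriplyRamified P' Q' N' ∧ branchValues P' Q' N' =
      (fun w ↦ g • w.map (· ^ 3)) '' insert ↑(0 : K) (insert ∞ (branchValues P Q N)) := by
  have hf3 := hf.pow_three h3 hB
  refine ⟨_, _, _, hf3.linearCombination g, ?_⟩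
  rw [hf3.branchValues_linearCombination, hf.branchValues_pow_three h3 hB, Set.image_image]

end IsOnlyTriplyRamified

end RatMap

theorem exists_isOnlyTriplyRamified_subset_branchValues [IsAlgClosed K] (h3 : (3 : K) ≠ 0)
    (S : Finset (OnePoint K)) {Z : Set (OnePoint K)} (hZ : Z.Finite) (hSZ : Disjoint ↑S Z) :
    ∃ P Q N, IsOnlyTriplyRamified P Q N ∧ ↑S ⊆ branchValues P Q N ∧
      Disjoint (branchValues P Q N) Z := by
  induction hn : S.card using Nat.strong_induction_on generalizing S Z with
  | _ n ih =>
    rcases S.eq_empty_or_nonempty with rfl | ⟨y, hy⟩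
    · exact ⟨X, 1, 1, isOnlyTriplyRamified_X_one, by simp, by simp [branchValues_X_one]⟩
    obtain ⟨t, ht⟩ := OnePoint.exists_coe_notMem (hZ.union S.finite_toSet)
    obtain ⟨g, hgy, hgt⟩ := OnePoint.exists_smul_zero_smul_infty (y := y) (t := t)
      fun h ↦ ht (.inr (h ▸ hy))
    set G : OnePoint K → OnePoint K := fun w ↦ g • w.map (· ^ 3) with hG
    have hGsurj : G.Surjective :=
      (MulAction.surjective g).comp (OnePoint.map_pow_surjective three_ne_zero)
    have hG0 : G ↑(0 : K) = y := by simp [hG, hgy]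
    have hGt : G ∞ = t := by simp [hG, hgt]
    set S' := (S.erase y).image (Function.surjInv hGsurj)
    have hS'Z : Disjoint (S' : Set (OnePoint K)) (G ⁻¹' Z ∪ {↑(0 : K), ∞}) := by
      refine Set.disjoint_left.mpr fun w hw hwZ ↦ ?_
      obtain ⟨s, hs, rfl⟩ := Finset.mem_image.mp hw
      obtain ⟨hsy, hsS⟩ := Finset.mem_erase.mp hs
      rw [Set.mem_union, Set.mem_preimage, Function.surjInv_eq hGsurj] at hwZ
      rcases hwZ with hsZ | h0 | hinf
      · exact Set.disjoint_left.mp hSZ hsS hsZ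
      · exact hsy (by rw [← Function.surjInv_eq hGsurj s, h0, hG0])
      · exact ht (.inr (by rw [← hGt, ← hinf, Function.surjInv_eq hGsurj s]; exact hsS))
    obtain ⟨P, Q, N, hf, hS, hB⟩ := ih _
      (hn ▸ Finset.card_image_le.trans_lt (Finset.card_erase_lt_of_mem hy)) S'
      ((OnePoint.finite_preimage_map_pow three_ne_zero
        (hZ.preimage (MulAction.injective g).injOn)).union (Set.toFinite _)) hS'Z rfl
    obtain ⟨P', Q', N', hf', hB'⟩ :=
      hf.exists_mobius_comp_cube h3 (hB.mono_right Set.subset_union_right) g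
    refine ⟨P', Q', N', hf', ?_, ?_⟩ <;> rw [hB']
    · intro s hs
      by_cases hsy : s = y
      · exact ⟨↑(0 : K), by simp, hsy ▸ hG0⟩
      · refine ⟨Function.surjInv hGsurj s, .inr (.inr (hS ?_)), Function.surjInv_eq hGsurj s⟩
        exact Finset.mem_image_of_mem _ (Finset.mem_erase.mpr ⟨hsy, hs⟩)
    · refine Set.disjoint_left.mpr ?_
      rintro _ ⟨w, hw, rfl⟩ hwZ
      rcases hw with rfl | rfl | hwB
      · exact Set.disjoint_left.mp hSZ (hG0 ▸ hy : G ↑(0 : K) ∈ S) hwZ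
      · exact ht (.inl (hGt ▸ hwZ))
      · exact Set.disjoint_left.mp hB hwB (.inl hwZ)

section RatFunc

variable {P Q : K[X]}

theorem RatFunc.num_div_of_isCoprime (hPQ : IsCoprime P Q) :
    (algebraMap K[X] (RatFunc K) P / algebraMap K[X] (RatFunc K) Q).num =
      Polynomial.C Q.leadingCoeff⁻¹ * P := by
  simp [gcd_eq_one_of_isCoprime hPQ]

theorem RatFunc.denom_div_of_isCoprime (hPQ : IsCoprime P Q) (hQ : Q ≠ 0) :
    (algebraMap K[X] (RatFunc K) P / algebraMap K[X] (RatFunc K) Q).denom =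
      Polynomial.C Q.leadingCoeff⁻¹ * Q := by
  simp [gcd_eq_one_of_isCoprime hPQ, hQ]

theorem RatFunc.eval₂_X_inv_mul_X_pow {R : K[X]} {N : ℕ} (hR : R.natDegree ≤ N) :
    R.eval₂ C X⁻¹ * X ^ N = algebraMap K[X] (RatFunc K) (reflect N R) := by
  have : Invertible (X : RatFunc K) := invertibleOfNonzero X_ne_zero
  have h := eval₂_reflect_mul_pow C X N (reflect N R)
    (natDegree_reflect_le.trans (max_le le_rfl hR))
  rw [invOf_eq_inv, reflect_reflect] at h
  rw [h, ← algebraMap_eq_C, ← aeval_def, aeval_X_left_eq_algebraMap]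

theorem RatFunc.eval_X_inv_div (hPQ : IsCoprime P Q) (hQ : Q ≠ 0) {N : ℕ}
    (hP : P.natDegree ≤ N) (hQN : Q.natDegree ≤ N) :
    eval C X⁻¹ (algebraMap K[X] (RatFunc K) P / algebraMap K[X] (RatFunc K) Q) =
      algebraMap K[X] (RatFunc K) (reflect N P) / algebraMap K[X] (RatFunc K) (reflect N Q) := by
  have hc : Q.leadingCoeff⁻¹ ≠ 0 := inv_ne_zero (leadingCoeff_ne_zero.mpr hQ)
  rw [eval, num_div_of_isCoprime hPQ, denom_div_of_isCoprime hPQ hQ,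
    ← mul_div_mul_right _ _ (pow_ne_zero N X_ne_zero),
    eval₂_X_inv_mul_X_pow ((natDegree_C_mul_le _ _).trans hP),
    eval₂_X_inv_mul_X_pow ((natDegree_C_mul_le _ _).trans hQN), reflect_C_mul, reflect_C_mul,
    map_mul, map_mul, mul_div_mul_left _ _ (by simpa using hc)]

theorem evalP_div_coe (hPQ : IsCoprime P Q) (hQ : Q ≠ 0) (x : K) :
    evalP (algebraMap K[X] (RatFunc K) P / algebraMap K[X] (RatFunc K) Q) (some x) =
      homog (P.eval x) (Q.eval x) := by
  have hc : Q.leadingCoeff⁻¹ ≠ 0 := inv_ne_zero (leadingCoeff_ne_zero.mpr hQ)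
  simp only [evalP]
  rw [RatFunc.num_div_of_isCoprime hPQ, RatFunc.denom_div_of_isCoprime hPQ hQ]
  simp only [eval_mul, eval_C, mul_eq_zero, hc, false_or, mul_div_mul_left _ _ hc, homog]
  rfl

theorem evalP_div_none (hPQ : IsCoprime P Q) (hQ : Q ≠ 0) {N : ℕ} (hP : P.natDegree ≤ N)
    (hQN : Q.natDegree ≤ N) (hN : P.coeff N ≠ 0 ∨ Q.coeff N ≠ 0) :
    evalP (algebraMap K[X] (RatFunc K) P / algebraMap K[X] (RatFunc K) Q) none =
      homog (P.coeff N) (Q.coeff N) := by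
  have hc : Q.leadingCoeff⁻¹ ≠ 0 := inv_ne_zero (leadingCoeff_ne_zero.mpr hQ)
  have hQdeg : Q.coeff N ≠ 0 ↔ Q.natDegree = N :=
    ⟨fun h ↦ hQN.antisymm (le_natDegree_of_ne_zero h), fun h ↦ h ▸ leadingCoeff_ne_zero.mpr hQ⟩
  simp only [evalP]
  rw [RatFunc.num_div_of_isCoprime hPQ, RatFunc.denom_div_of_isCoprime hPQ hQ]
  simp only [degree_C_mul hc, natDegree_C_mul hc, coeff_C_mul, mul_div_mul_left _ _ hc, homog]
  split_ifs with hdeg hQN0 hQN0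
  · have hlt : Q.natDegree < N := hQN.lt_of_ne (mt hQdeg.mpr (not_not.mpr hQN0))
    have hPN : P.coeff N = 0 :=
      coeff_eq_zero_of_natDegree_lt ((natDegree_le_natDegree hdeg).trans_lt hlt)
    exact absurd hN (by simp [hPN, hQN0])
  · rw [hQdeg.mp hQN0]; rfl
  · rfl
  · rw [not_le, degree_eq_natDegree hQ, hQdeg.mp hQN0] at hdeg
    exact absurd (degree_le_of_natDegree_le hP) (not_le.mpr hdeg)

theorem ramIdxAt_div (hPQ : IsCoprime P Q) (hQ : Q ≠ 0) (x : K) :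
    ramIdxAt (algebraMap K[X] (RatFunc K) P / algebraMap K[X] (RatFunc K) Q) x =
      rootMultiplicity x (fiberPoly P Q x) := by
  have hc : Q.leadingCoeff⁻¹ ≠ 0 := inv_ne_zero (leadingCoeff_ne_zero.mpr hQ)
  unfold ramIdxAt
  rw [RatFunc.num_div_of_isCoprime hPQ, RatFunc.denom_div_of_isCoprime hPQ hQ]
  simp only [eval_mul, eval_C, mul_eq_zero, hc, false_or, mul_div_mul_left _ _ hc]
  split_ifs with hQx
  · have hPx : P.eval x ≠ 0 :=
      (aeval_ne_zero_of_isCoprime hPQ x).resolve_right (by simpa using hQx)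
    rw [rootMultiplicity_C_mul hc, fiberPoly, hQx, map_zero, zero_mul, zero_sub, ← neg_mul,
      ← map_neg, rootMultiplicity_C_mul (neg_ne_zero.mpr hPx)]
  · have hsub : algebraMap K[X] (RatFunc K) P / algebraMap K[X] (RatFunc K) Q -
        RatFunc.C (P.eval x / Q.eval x) =
        algebraMap K[X] (RatFunc K) (P - C (P.eval x / Q.eval x) * Q) /
          algebraMap K[X] (RatFunc K) Q := by
      rw [map_sub, map_mul, RatFunc.algebraMap_C, sub_div,
        mul_div_cancel_right₀ _ (RatFunc.algebraMap_ne_zero hQ)]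
    have hcop : IsCoprime (P - C (P.eval x / Q.eval x) * Q) Q := by
      simpa [sub_eq_add_neg, ← neg_mul] using hPQ.add_mul_right_left (-C (P.eval x / Q.eval x))
    have hfiber : fiberPoly P Q x = C (Q.eval x) * (P - C (P.eval x / Q.eval x) * Q) := by
      rw [fiberPoly, mul_sub, ← mul_assoc, ← map_mul, mul_div_cancel₀ _ hQx]
    rw [hsub, RatFunc.num_div_of_isCoprime hcop, rootMultiplicity_C_mul hc, hfiber,
      rootMultiplicity_C_mul hQx]

end RatFunc

namespace IsSeparableRatMap

variable {P Q : K[X]} {N : ℕ} (hf : IsSeparableRatMap P Q N)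
include hf

theorem div_ne_C (c : K) :
    algebraMap K[X] (RatFunc K) P / algebraMap K[X] (RatFunc K) Q ≠ RatFunc.C c := by
  intro h
  rw [div_eq_iff (RatFunc.algebraMap_ne_zero hf.right_ne_zero), ← RatFunc.algebraMap_C,
    ← map_mul, (RatFunc.algebraMap_injective K).eq_iff] at h
  apply hf.wronskian_ne_zero
  rw [h, wronskian]
  simp only [derivative_C_mul]
  ring

variable [IsAlgClosed K]

theorem isCoprime : IsCoprime P Q :=
  (isCoprime_iff_aeval_ne_zero_of_isAlgClosed K K P Q).mpr fun x ↦ by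
    simpa only [coe_aeval_eq_eval] using hf.eval_ne_zero x

theorem isCoprime_reflect : IsCoprime (reflect N P) (reflect N Q) := by
  refine (isCoprime_iff_aeval_ne_zero_of_isAlgClosed K K _ _).mpr fun x ↦ ?_
  simp only [coe_aeval_eq_eval]
  rcases eq_or_ne x 0 with rfl | hx
  · simpa only [eval_zero_reflect] using hf.coeff_ne_zero
  · simpa [eval_reflect hf.natDegree_left_le hx, eval_reflect hf.natDegree_right_le hx, hx]
      using hf.eval_ne_zero x⁻¹

theorem separableRF_div :
    SeparableRF (algebraMap K[X] (RatFunc K) P / algebraMap K[X] (RatFunc K) Q) := by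
  have hc : Q.leadingCoeff⁻¹ ≠ 0 := inv_ne_zero (leadingCoeff_ne_zero.mpr hf.right_ne_zero)
  unfold SeparableRF
  rw [RatFunc.num_div_of_isCoprime hf.isCoprime,
    RatFunc.denom_div_of_isCoprime hf.isCoprime hf.right_ne_zero]
  have : derivative (C Q.leadingCoeff⁻¹ * P) * (C Q.leadingCoeff⁻¹ * Q) -
      C Q.leadingCoeff⁻¹ * P * derivative (C Q.leadingCoeff⁻¹ * Q) =
      -(C Q.leadingCoeff⁻¹ ^ 2 * wronskian P Q) := by
    simp only [wronskian, derivative_C_mul]; ring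
  rw [this, neg_ne_zero]
  exact mul_ne_zero (pow_ne_zero 2 (C_ne_zero.mpr hc)) hf.wronskian_ne_zero

theorem evalP_div (p : OnePoint K) :
    evalP (algebraMap K[X] (RatFunc K) P / algebraMap K[X] (RatFunc K) Q) p =
      ratMap P Q N p := by
  induction p with
  | infty =>
    exact evalP_div_none hf.isCoprime hf.right_ne_zero hf.natDegree_left_le
      hf.natDegree_right_le hf.coeff_ne_zero
  | coe x => exact evalP_div_coe hf.isCoprime hf.right_ne_zero x

theorem ramIdxP_div (p : OnePoint K) :
    ramIdxP (algebraMap K[X] (RatFunc K) P / algebraMap K[X] (RatFunc K) Q) p =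
      ratMapRamIdx P Q N p := by
  induction p with
  | infty =>
    simp only [ramIdxP]
    rw [RatFunc.eval_X_inv_div hf.isCoprime hf.right_ne_zero hf.natDegree_left_le
      hf.natDegree_right_le, ramIdxAt_div hf.isCoprime_reflect
      (mt reflect_eq_zero_iff.mp hf.right_ne_zero)]
    rfl
  | coe x => exact ramIdxAt_div hf.isCoprime hf.right_ne_zero x

end IsSeparableRatMap

theorem exists_triple_ramified_map_with_branch_points_general
    [IsAlgClosed K] (hchar : ringChar K ≠ 3)
    (n : ℕ) (y : Fin n → Option K) :
    ∃ h : RatFunc K, (∀ c : K, h ≠ RatFunc.C c) ∧ OnlyTripleRamification h ∧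
      ∀ i, ∃ a : Option K, evalP h a = y i ∧ ramIdxP h a = 3 := by
  have h3 : (3 : K) ≠ 0 := fun h ↦ by
    rcases (Nat.dvd_prime Nat.prime_three).mp ((ringChar.spec K 3).mp (by exact_mod_cast h))
      with h1 | h1
    exacts [CharP.ringChar_ne_one h1, hchar h1]
  obtain ⟨P, Q, N, hf, hy, -⟩ := exists_isOnlyTriplyRamified_subset_branchValues h3
    (Finset.univ.image y) Set.finite_empty (Set.disjoint_empty _)
  refine ⟨_, hf.div_ne_C, ⟨hf.separableRF_div, fun p : OnePoint K ↦ ?_⟩, fun i ↦ ?_⟩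
  · rw [hf.ramIdxP_div]
    exact hf.ratMapRamIdx_eq p
  · obtain ⟨p, hp, hpy⟩ := hy (Finset.mem_image.mpr ⟨i, Finset.mem_univ i, rfl⟩)
    exact ⟨p, (hf.evalP_div p).trans hpy, (hf.ramIdxP_div p).trans hp⟩

/-- Let `K` be an algebraically closed field of characteristic `≠ 3` and let
`y₁, …, y_n` be pairwise distinct points of `ℙ¹(K)`.  Then there is a nonconstant
rational function `h ∈ K(z)` with only triple ramification such that every `y_i` is a
branch point of `h`: for each `i` there is a point `a` of `ℙ¹(K)` with `h(a) = y_i`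
and `e_h(a) = 3`. -/
theorem exists_triple_ramified_map_with_branch_points
    [IsAlgClosed K] (hchar : ringChar K ≠ 3)
    (n : ℕ) (y : Fin n → Option K) (hy : Function.Injective y) :
    ∃ h : RatFunc K, (∀ c : K, h ≠ RatFunc.C c) ∧ OnlyTripleRamification h ∧
      ∀ i, ∃ a : Option K, evalP h a = y i ∧ ramIdxP h a = 3 :=
  exists_triple_ramified_map_with_branch_points_general hchar n y

end
end

section
/- Let k be a field and let φ : k⟦X, Y⟧ → k⟦s⟧ be the continuous k-algebra homomorphism of formal power series rings determined by X ↦ s² and Y ↦ s³. Then the kernel of φ is exactly the ideal of k⟦X, Y⟧ generated by Y² − X³. -/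
/-!
Along a fibre of the weight `(a, b) ↦ 2a + 3b` the exponents are `(i - 3t, j + 2t)`, starting
from the unique one with `j ≤ 1`; a step `(a, b) ↦ (a - 3, b + 2)` is multiplication by
`Y² / X³`. So dividing `F` by `Y² - X³` leaves a remainder `A(X) + Y B(X)` whose coefficients are
the sums of the coefficients of `F` along these fibres (`fiberSum`). Those sums are exactly the
coefficients of `φ F`, so they vanish on the kernel and `Y² - X³` divides `F`. Conversely
`φ (Y² - X³) = (s³)² - (s²)³ = 0`.
-/

open MvPowerSeries Finset Finsupp

namespace CuspParametrization

section WeightSums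

variable {M : Type*} [AddCommMonoid M]

def weightSum (c : ℕ → ℕ → M) (n : ℕ) : M :=
  ∑ p ∈ range (n + 1) ×ˢ range (n + 1), if 2 * p.1 + 3 * p.2 = n then c p.1 p.2 else 0

def fiberSum (c : ℕ → ℕ → M) (i j : ℕ) : M :=
  ∑ t ∈ range (i / 3 + 1), c (i - 3 * t) (j + 2 * t)

lemma fiberSum_eq (c : ℕ → ℕ → M) (i j : ℕ) :
    fiberSum c i j = c i j + if 3 ≤ i then fiberSum c (i - 3) (j + 2) else 0 := by
  rcases lt_or_ge i 3 with hi | hi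
  · simp [fiberSum, Nat.div_eq_of_lt hi, not_le.mpr hi]
  · obtain ⟨i, rfl⟩ := Nat.exists_eq_add_of_le' hi
    rw [fiberSum, fiberSum, if_pos hi, Nat.add_sub_cancel, Nat.add_div_right i three_pos,
      sum_range_succ', add_comm]
    congr 1
    refine sum_congr rfl fun t _ => ?_
    congr 1 <;> omega

lemma weightSum_eq_fiberSum (c : ℕ → ℕ → M) {i j : ℕ} (hj : j ≤ 1) :
    weightSum c (2 * i + 3 * j) = fiberSum c i j := by
  rw [weightSum, ← sum_filter, fiberSum]
  have fiber_param : ∀ a b, 2 * a + 3 * b = 2 * i + 3 * j →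
      i - 3 * ((b - j) / 2) = a ∧ j + 2 * ((b - j) / 2) = b := by
    intros; omega
  refine sum_nbij' (fun p => (p.2 - j) / 2) (fun t => (i - 3 * t, j + 2 * t)) ?_ ?_ ?_ ?_ ?_ <;>
    simp only [mem_filter, mem_product, mem_range, Prod.forall, Prod.mk.injEq]
  · intros; omega
  · intros; omega
  · exact fun a b h => fiber_param a b h.2
  · intros; omega
  · intro a b h
    rw [(fiber_param a b h.2).1, (fiber_param a b h.2).2]

lemma weightSum_ite_eq (a b n : ℕ) (r : M) :
    weightSum (fun p q => if p = a ∧ q = b then r else 0) n =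
      if 2 * a + 3 * b = n then r else 0 := by
  rw [weightSum]
  split_ifs with h
  · rw [sum_eq_single_of_mem (a, b) (by simp only [mem_product, mem_range]; omega)]
    · simp [h]
    · rintro ⟨p, q⟩ _ hpq
      simp_all
  · refine sum_eq_zero fun p _ => ?_
    grind

end WeightSums

noncomputable section

def bidegree (a b : ℕ) : Fin 2 →₀ ℕ := single 0 a + single 1 b

@[simp] lemma bidegree_apply_zero (a b : ℕ) : bidegree a b 0 = a := by simp [bidegree]

@[simp] lemma bidegree_apply_one (a b : ℕ) : bidegree a b 1 = b := by simp [bidegree]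

lemma finsupp_fin_two_eq_iff {d e : Fin 2 →₀ ℕ} : d = e ↔ d 0 = e 0 ∧ d 1 = e 1 := by
  rw [Finsupp.ext_iff, Fin.forall_fin_two]

lemma eq_bidegree (d : Fin 2 →₀ ℕ) : d = bidegree (d 0) (d 1) := by
  simp [finsupp_fin_two_eq_iff]

variable {R : Type*} [CommRing R]

def bicoeff (F : MvPowerSeries (Fin 2) R) (a b : ℕ) : R := coeff (bidegree a b) F

def cusp : MvPowerSeries (Fin 2) R := X 1 ^ 2 - X 0 ^ 3

lemma weightSum_bicoeff_X_zero (n : ℕ) :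
    weightSum (bicoeff (X 0 : MvPowerSeries (Fin 2) R)) n =
      PowerSeries.coeff n (PowerSeries.X ^ 2 : PowerSeries R) := by
  have : bicoeff (X 0 : MvPowerSeries (Fin 2) R) = fun a b => if a = 1 ∧ b = 0 then 1 else 0 := by
    ext a b; simp [bicoeff, coeff_X, finsupp_fin_two_eq_iff]
  rw [this, weightSum_ite_eq, PowerSeries.coeff_X_pow]
  simp [eq_comm]

lemma weightSum_bicoeff_X_one (n : ℕ) :
    weightSum (bicoeff (X 1 : MvPowerSeries (Fin 2) R)) n =
      PowerSeries.coeff n (PowerSeries.X ^ 3 : PowerSeries R) := by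
  have : bicoeff (X 1 : MvPowerSeries (Fin 2) R) = fun a b => if a = 0 ∧ b = 1 then 1 else 0 := by
    ext a b; simp [bicoeff, coeff_X, finsupp_fin_two_eq_iff]
  rw [this, weightSum_ite_eq, PowerSeries.coeff_X_pow]
  simp [eq_comm]

lemma bicoeff_cusp_mul (Q : MvPowerSeries (Fin 2) R) (a b : ℕ) :
    bicoeff (cusp * Q) a b =
      (if 2 ≤ b then bicoeff Q a (b - 2) else 0) - (if 3 ≤ a then bicoeff Q (a - 3) b else 0) := by
  simp only [bicoeff, cusp, sub_mul, map_sub, X_pow_eq, coeff_monomial_mul, one_mul, single_le_iff,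
    bidegree_apply_zero, bidegree_apply_one]
  congr 4 <;> simp [finsupp_fin_two_eq_iff]

def cuspDiv (F : MvPowerSeries (Fin 2) R) : MvPowerSeries (Fin 2) R :=
  fun d => fiberSum (bicoeff F) (d 0) (d 1 + 2)

lemma bicoeff_cuspDiv (F : MvPowerSeries (Fin 2) R) (a b : ℕ) :
    bicoeff (cuspDiv F) a b = fiberSum (bicoeff F) a (b + 2) := by
  rw [bicoeff, coeff_apply, cuspDiv, bidegree_apply_zero, bidegree_apply_one]

lemma bicoeff_sub_cusp_mul_cuspDiv (F : MvPowerSeries (Fin 2) R) (a b : ℕ) :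
    bicoeff (F - cusp * cuspDiv F) a b =
      if b < 2 then fiberSum (bicoeff F) a b else 0 := by
  rw [bicoeff, map_sub, ← bicoeff, ← bicoeff, bicoeff_cusp_mul, bicoeff_cuspDiv, bicoeff_cuspDiv]
  by_cases hb : b < 2
  · rw [if_neg (by omega), if_pos hb, fiberSum_eq (bicoeff F) a b]
    ring
  · rw [if_pos (by omega), if_neg hb, Nat.sub_add_cancel (by omega), fiberSum_eq (bicoeff F) a b]
    ring

lemma eq_cusp_mul_cuspDiv_of_weightSum_eq_zero {F : MvPowerSeries (Fin 2) R}
    (hF : ∀ n, weightSum (bicoeff F) n = 0) : F = cusp * cuspDiv F := by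
  rw [← sub_eq_zero]
  ext d
  obtain ⟨a, b, rfl⟩ : ∃ a b, d = bidegree a b := ⟨_, _, eq_bidegree d⟩
  rw [map_zero, ← bicoeff, bicoeff_sub_cusp_mul_cuspDiv]
  split_ifs with hb
  · rw [← weightSum_eq_fiberSum _ (Nat.le_of_lt_succ hb), hF]
  · rfl

end

end CuspParametrization

open CuspParametrization

/-- Let `k` be a field and let `φ : k⟦X, Y⟧ → k⟦s⟧` be the continuous `k`-algebra
homomorphism of formal power series rings determined by `X ↦ s²`, `Y ↦ s³`, i.e. the
substitution `F(X, Y) ↦ F(s², s³)`.  Concretely, `φ` is the `k`-algebra homomorphism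
whose value on `F` has `n`-th coefficient `∑_{2i + 3j = n} F_{(i,j)}`.  Then the
kernel of `φ` is exactly the ideal of `k⟦X, Y⟧` generated by `Y² − X³`. -/
theorem ker_subst_sq_cube (k : Type*) [Field k]
    (φ : MvPowerSeries (Fin 2) k →ₐ[k] PowerSeries k)
    (hφ : ∀ (F : MvPowerSeries (Fin 2) k) (n : ℕ),
      PowerSeries.coeff (R := k) n (φ F) =
        ∑ p ∈ Finset.range (n + 1) ×ˢ Finset.range (n + 1),
          if 2 * p.1 + 3 * p.2 = n then
            MvPowerSeries.coeff (R := k) (Finsupp.single 0 p.1 + Finsupp.single 1 p.2) F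
          else 0) :
    RingHom.ker φ =
      Ideal.span {(MvPowerSeries.X 1 : MvPowerSeries (Fin 2) k) ^ 2 -
        MvPowerSeries.X 0 ^ 3} := by
  have coeff_φ (F : MvPowerSeries (Fin 2) k) (n : ℕ) :
      PowerSeries.coeff n (φ F) = weightSum (bicoeff F) n :=
    hφ F n
  have φ_X_zero : φ (X 0) = PowerSeries.X ^ 2 :=
    PowerSeries.ext fun n => (coeff_φ _ n).trans (weightSum_bicoeff_X_zero n)
  have φ_X_one : φ (X 1) = PowerSeries.X ^ 3 :=
    PowerSeries.ext fun n => (coeff_φ _ n).trans (weightSum_bicoeff_X_one n)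
  apply le_antisymm
  · intro F hF
    refine Ideal.mem_span_singleton.mpr ⟨cuspDiv F, eq_cusp_mul_cuspDiv_of_weightSum_eq_zero ?_⟩
    intro n
    rw [← coeff_φ, RingHom.mem_ker.mp hF, map_zero]
  · rw [Ideal.span_le, Set.singleton_subset_iff, SetLike.mem_coe, RingHom.mem_ker, map_sub,
      map_pow, map_pow, φ_X_zero, φ_X_one]
    ring
end
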